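/- For the Cefalú quartic with λ = 1, every point of ℙ³ of the form [±1:±1:±1:0] together with all coordinate permutations (i.e., points with exactly one coordinate zero and the other three equal to ±1) is a singular point of {p_1 = 0}, and there are exactly 16 such points in ℙ³. -/

import Mathlib

open scoped BigOperators

/-- The Cefalú family of quartic polynomials. -/
noncomputable def cefalu (lam : ℂ) (z : Fin 4 → ℂ) : ℂ :=
  (∑ i, z i ^ 4) - (lam / 3) * (∑ i, z i ^ 2) ^ 2

/-- Partial derivative of `cefalu lam` in the `i`-th coordinate. -/
noncomputable def cefaluPartial (lam : ℂ) (z : Fin 4 → ℂ) (i : Fin 4) : ℂ :=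
  deriv (fun t => cefalu lam (Function.update z i t)) (z i)

/-- Points with exactly one coordinate zero and the other three equal to `±1`. -/
def threeSignPoints : Set (Fin 4 → ℂ) :=
  {z | ∃ i : Fin 4, z i = 0 ∧ ∀ k, k ≠ i → (z k = 1 ∨ z k = -1)}

/-! On a point with one zero coordinate and three coordinates `±1` every coordinate satisfies
`x ^ 3 = x` and `∑ z_k ^ 2 = ∑ z_k ^ 4 = 3`, so `p_1(z) = 3 - 9 / 3 = 0` and
`∂_k p_1(z) = 4 z_k ^ 3 - (4 / 3) (∑ z_j ^ 2) z_k = 4 (z_k ^ 3 - z_k) = 0`.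
Dividing by the first nonzero coordinate normalises each such point of `ℙ³` uniquely; the
normal form is determined by the position of the zero and the two remaining signs, giving
`4 · 2 ^ 2 = 16` points. -/

open Finset Function

lemma sum_update_pow {ι R : Type*} [Fintype ι] [DecidableEq ι] [Semiring R] (z : ι → R) (i : ι)
    (t : R) (n : ℕ) : ∑ k, update z i t k ^ n = t ^ n + ∑ k ∈ univ \ {i}, z k ^ n := by
  have h : (fun k => update z i t k ^ n) = update (fun k => z k ^ n) i (t ^ n) :=
    funext (apply_update (fun _ x => x ^ n) z i t)
  rw [h, sum_update_of_mem (mem_univ i)]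

lemma cefaluPartial_eq (lam : ℂ) (z : Fin 4 → ℂ) (i : Fin 4) :
    cefaluPartial lam z i = 4 * z i ^ 3 - 4 * lam / 3 * (∑ k, z k ^ 2) * z i := by
  set A := ∑ k ∈ univ \ {i}, z k ^ 4
  set B := ∑ k ∈ univ \ {i}, z k ^ 2
  have hB : ∑ k, z k ^ 2 = z i ^ 2 + B := by
    rw [← sum_update_pow z i (z i), update_eq_self]
  have hderiv : HasDerivAt (fun t => (t ^ 4 + A) - lam / 3 * (t ^ 2 + B) ^ 2)
      (4 * z i ^ 3 - lam / 3 * (2 * (z i ^ 2 + B) * (2 * z i))) (z i) := by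
    have hsq : HasDerivAt (fun t => (t ^ 2 + B) ^ 2) (2 * (z i ^ 2 + B) * (2 * z i)) (z i) := by
      simpa using ((hasDerivAt_pow 2 (z i)).add_const B).fun_pow 2
    exact ((hasDerivAt_pow 4 (z i)).add_const A).fun_sub (hsq.const_mul (lam / 3))
  simp only [cefaluPartial, cefalu, sum_update_pow]
  rw [hderiv.deriv, hB]
  ring

lemma cefalu_one_singular_of_cube_eq_self {z : Fin 4 → ℂ} (hcube : ∀ k, z k ^ 3 = z k)
    (hsq : ∑ k, z k ^ 2 = 3) : cefalu 1 z = 0 ∧ ∀ k, cefaluPartial 1 z k = 0 := by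
  have hquartic : ∑ k, z k ^ 4 = 3 := by
    rw [← hsq]
    exact sum_congr rfl fun k _ => by rw [pow_succ, hcube, sq]
  refine ⟨by simp only [cefalu, hquartic, hsq]; norm_num, fun k => ?_⟩
  rw [cefaluPartial_eq, hsq, hcube]
  ring

lemma mem_threeSignPoints_iff {z : Fin 4 → ℂ} :
    z ∈ threeSignPoints ↔
      ∃ i, z i = 0 ∧ ∀ j, z (i.succAbove j) = 1 ∨ z (i.succAbove j) = -1 := by
  refine exists_congr fun i => and_congr_right fun _ => ⟨fun h j => h _ (i.succAbove_ne j), ?_⟩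
  intro h k hk
  obtain ⟨j, rfl⟩ := Fin.exists_succAbove_eq hk
  exact h j

theorem cefalu_one_singular_of_mem_threeSignPoints {z : Fin 4 → ℂ} (hz : z ∈ threeSignPoints) :
    cefalu 1 z = 0 ∧ ∀ k, cefaluPartial 1 z k = 0 := by
  obtain ⟨i, hi, hsign⟩ := mem_threeSignPoints_iff.1 hz
  have hsq : ∀ j, z (i.succAbove j) ^ 2 = 1 := fun j => sq_eq_one_iff.2 (hsign j)
  refine cefalu_one_singular_of_cube_eq_self (fun k => ?_) ?_
  · induction k using Fin.succAboveCases i with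
    | x => simp [hi]
    | p j => rw [pow_succ, hsq, one_mul]
  · simp [Fin.sum_univ_succAbove _ i, hi, hsq]

lemma eq_one_or_eq_neg_one_iff_exists_intCast_unit {R : Type*} [Ring R] {x : R} :
    x = 1 ∨ x = -1 ↔ ∃ u : ℤˣ, ((u : ℤ) : R) = x := by
  constructor
  · rintro (rfl | rfl)
    exacts [⟨1, by simp⟩, ⟨-1, by simp⟩]
  · rintro ⟨u, rfl⟩
    rcases Int.units_eq_one_or u with rfl | rfl <;> simp

section NormalizedSignPoint

variable {n : ℕ}

/-- The normal form, with first nonzero coordinate `1`, of a point of `ℙⁿ⁺¹` with a zero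
coordinate at `i` and all other coordinates `±1`. -/
def normalizedSignPoint (i : Fin (n + 2)) (s : Fin n → ℤˣ) : Fin (n + 2) → ℂ :=
  i.insertNth 0 fun j => (((Fin.cons 1 s : Fin (n + 1) → ℤˣ) j : ℤ) : ℂ)

@[simp]
lemma normalizedSignPoint_apply_self (i : Fin (n + 2)) (s : Fin n → ℤˣ) :
    normalizedSignPoint i s i = 0 :=
  Fin.insertNth_apply_same _ _ _

lemma normalizedSignPoint_apply_succAbove (i : Fin (n + 2)) (s : Fin n → ℤˣ) (j : Fin (n + 1)) :
    normalizedSignPoint i s (i.succAbove j) = (((Fin.cons 1 s : Fin (n + 1) → ℤˣ) j : ℤ) : ℂ) :=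
  Fin.insertNth_apply_succAbove _ _ _ _

@[simp]
lemma normalizedSignPoint_apply_succAbove_zero (i : Fin (n + 2)) (s : Fin n → ℤˣ) :
    normalizedSignPoint i s (i.succAbove 0) = 1 := by
  simp [normalizedSignPoint_apply_succAbove]

@[simp]
lemma normalizedSignPoint_apply_succAbove_succ (i : Fin (n + 2)) (s : Fin n → ℤˣ) (k : Fin n) :
    normalizedSignPoint i s (i.succAbove k.succ) = ((s k : ℤ) : ℂ) := by
  simp [normalizedSignPoint_apply_succAbove]

lemma normalizedSignPoint_apply_eq_zero_iff {i m : Fin (n + 2)} (s : Fin n → ℤˣ) :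
    normalizedSignPoint i s m = 0 ↔ m = i := by
  induction m using Fin.succAboveCases i with
  | x => simp
  | p j => simp [normalizedSignPoint_apply_succAbove, Fin.succAbove_ne]

lemma normalizedSignPoint_ne_zero (i : Fin (n + 2)) (s : Fin n → ℤˣ) :
    normalizedSignPoint i s ≠ 0 :=
  fun h => by simpa using congrFun h (i.succAbove 0)

lemma injective_mk_normalizedSignPoint :
    Function.Injective fun p : Fin (n + 2) × (Fin n → ℤˣ) =>
      Projectivization.mk ℂ (normalizedSignPoint p.1 p.2) (normalizedSignPoint_ne_zero _ _) := by
  rintro ⟨i, s⟩ ⟨i', s'⟩ h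
  obtain ⟨a, ha⟩ := (Projectivization.mk_eq_mk_iff' ℂ _ _ _ _).1 h
  have ha0 : a ≠ 0 := by
    rintro rfl
    exact normalizedSignPoint_ne_zero i s (by simpa using ha.symm)
  obtain rfl : i = i' := by
    have := congrFun ha i
    simpa [ha0, normalizedSignPoint_apply_eq_zero_iff] using this
  obtain rfl : a = 1 := by simpa using congrFun ha (i.succAbove 0)
  refine Prod.ext rfl (funext fun k => Units.ext ?_)
  simpa using (congrFun ha (i.succAbove k.succ)).symm

lemma exists_mk_normalizedSignPoint_eq {z : Fin (n + 2) → ℂ} (hz : z ≠ 0) {i : Fin (n + 2)}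
    (hi : z i = 0) (hsign : ∀ j, z (i.succAbove j) = 1 ∨ z (i.succAbove j) = -1) :
    ∃ s, Projectivization.mk ℂ (normalizedSignPoint i s) (normalizedSignPoint_ne_zero _ _) =
      Projectivization.mk ℂ z hz := by
  choose u hu using fun j => eq_one_or_eq_neg_one_iff_exists_intCast_unit.1 (hsign j)
  -- rescale by the first sign `u 0`, which is its own inverse
  refine ⟨fun k => u 0 * u k.succ, (Projectivization.mk_eq_mk_iff' ℂ _ _ _ _).2
    ⟨((u 0 : ℤ) : ℂ), funext fun m => ?_⟩⟩
  induction m using Fin.succAboveCases i with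
  | x => simp [hi]
  | p j =>
    induction j using Fin.cases with
    | zero => simp [← hu, ← Int.cast_mul, ← Units.val_mul]
    | succ k => simp [← hu]

end NormalizedSignPoint

lemma projectivized_threeSignPoints_eq_range :
    {x : Projectivization ℂ (Fin 4 → ℂ) |
        ∃ z : Fin 4 → ℂ, ∃ hz : z ≠ 0, z ∈ threeSignPoints ∧ x = Projectivization.mk ℂ z hz} =
      Set.range fun p : Fin 4 × (Fin 2 → ℤˣ) =>
        Projectivization.mk ℂ (normalizedSignPoint p.1 p.2) (normalizedSignPoint_ne_zero _ _) := by
  ext x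
  constructor
  · rintro ⟨z, hz, hmem, rfl⟩
    obtain ⟨i, hi, hsign⟩ := mem_threeSignPoints_iff.1 hmem
    obtain ⟨s, hs⟩ := exists_mk_normalizedSignPoint_eq hz hi hsign
    exact ⟨(i, s), hs⟩
  · rintro ⟨⟨i, s⟩, rfl⟩
    have hsign (j : Fin 3) : normalizedSignPoint i s (i.succAbove j) = 1 ∨
        normalizedSignPoint i s (i.succAbove j) = -1 :=
      eq_one_or_eq_neg_one_iff_exists_intCast_unit.2
        ⟨(Fin.cons 1 s : Fin 3 → ℤˣ) j, (normalizedSignPoint_apply_succAbove i s j).symm⟩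
    exact ⟨_, _, mem_threeSignPoints_iff.2 ⟨i, normalizedSignPoint_apply_self i s, hsign⟩, rfl⟩

/-- At `λ = 1`, every point of `ℙ³` with exactly one coordinate zero and the
other three equal to `±1` is a singular point of `{p_1 = 0}`, and there are
exactly `16` such points in `ℙ³`. -/
theorem cefalu_singularities_one :
    (∀ z ∈ threeSignPoints,
        cefalu 1 z = 0 ∧ ∀ k, cefaluPartial 1 z k = 0) ∧
      Set.ncard {x : Projectivization ℂ (Fin 4 → ℂ) |
        ∃ z : Fin 4 → ℂ, ∃ hz : z ≠ 0, z ∈ threeSignPoints ∧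
          x = Projectivization.mk ℂ z hz} = 16 := by
  refine ⟨fun z hz => cefalu_one_singular_of_mem_threeSignPoints hz, ?_⟩
  rw [projectivized_threeSignPoints_eq_range,
    Set.ncard_range_of_injective injective_mk_normalizedSignPoint]
  simp
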